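/- arXiv:2208.03829 — 4 statements merged into one kernel-verified Lean document; each statement's English description precedes it below -/
import Mathlib

section
/- Fix d ≥ 1, φ ∈ (0,1), and p ∈ [0,1]^d. Define the vicinity of p as V(p) = { q ∈ [0,1]^d : vol(BB(p,q)) ≤ φ }, where BB(p,q) = ∏_{i=1}^d [min(p_i,q_i), max(p_i,q_i)] is the axis-parallel bounding box of p and q. Then vol(V(p)) ≤ 2^d · vol(V(0)), where V(0) is the vicinity of the origin. -/
open MeasureTheory

/-- The vicinity `V(p) = {q ∈ [0,1]^d : vol(BB(p,q)) ≤ φ}` of any point `p ∈ [0,1]^d`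
has volume at most `2^d` times the volume of the vicinity of the origin. -/
theorem stmt_4 (d : ℕ) (hd : 1 ≤ d) (φ : ℝ) (hφ : 0 < φ) (hφ1 : φ < 1)
    (p : Fin d → ℝ) (hp : ∀ i, p i ∈ Set.Icc (0 : ℝ) 1) :
    volume {q : Fin d → ℝ | (∀ i, q i ∈ Set.Icc (0 : ℝ) 1) ∧
          ∏ i, (max (p i) (q i) - min (p i) (q i)) ≤ φ}
      ≤ 2 ^ d *
        volume {q : Fin d → ℝ | (∀ i, q i ∈ Set.Icc (0 : ℝ) 1) ∧ ∏ i, q i ≤ φ} := by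
  set A : Set (Fin d → ℝ) := {q | (∀ i, q i ∈ Set.Icc (0 : ℝ) 1) ∧
      ∏ i, (max (p i) (q i) - min (p i) (q i)) ≤ φ} with hA
  set B : Set (Fin d → ℝ) := {q | (∀ i, q i ∈ Set.Icc (0 : ℝ) 1) ∧ ∏ i, q i ≤ φ} with hB
  -- B is measurable
  have MB : MeasurableSet B := by
    have h1 : MeasurableSet {q : Fin d → ℝ | ∀ i, q i ∈ Set.Icc (0 : ℝ) 1} := by
      rw [Set.setOf_forall]
      exact MeasurableSet.iInter fun i =>
        (measurable_pi_apply i) measurableSet_Icc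
    have h2 : MeasurableSet {q : Fin d → ℝ | ∏ i, q i ≤ φ} := by
      have : Measurable fun q : Fin d → ℝ => ∏ i, q i :=
        Finset.measurable_prod _ fun i _ => measurable_pi_apply i
      exact this measurableSet_Iic
    exact h1.inter h2
  -- for each sign vector s, the "unfolding" map
  set T : (Fin d → Bool) → (Fin d → ℝ) → (Fin d → ℝ) :=
    fun s q i => if s i then q i - p i else p i - q i with hT
  have hMP : ∀ s, MeasurePreserving (T s) volume volume := by
    intro s
    exact volume_preserving_pi
      (f := fun i x => if s i then x - p i else p i - x) (fun i => by
      cases h : s i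
      · simp only [h, Bool.false_eq_true, if_false]
        exact Measure.measurePreserving_sub_left (volume : Measure ℝ) (p i)
      · simp only [h, if_true]
        exact measurePreserving_sub_right (volume : Measure ℝ) (p i))
  -- covering of A
  have hcov : A ⊆ ⋃ s : Fin d → Bool, T s ⁻¹' B := by
    intro q hq
    refine Set.mem_iUnion.2 ⟨fun i => decide (p i ≤ q i), ?_⟩
    have key : ∀ i, T (fun i => decide (p i ≤ q i)) q i
        = max (p i) (q i) - min (p i) (q i) := by
      intro i
      by_cases h : p i ≤ q i
      · simp [hT, h, max_eq_right h, min_eq_left h]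
      · have h' := le_of_not_ge h
        simp [hT, h, max_eq_left h', min_eq_right h']
    constructor
    · intro i
      rw [key i]
      have hpi := hp i
      have hqi := hq.1 i
      constructor
      · simp [sub_nonneg, min_le_max]
      · rcases le_total (p i) (q i) with h | h
        · rw [max_eq_right h, min_eq_left h]; linarith [hqi.2, hpi.1]
        · rw [max_eq_left h, min_eq_right h]; linarith [hpi.2, hqi.1]
    · calc ∏ i, T (fun i => decide (p i ≤ q i)) q i
          = ∏ i, (max (p i) (q i) - min (p i) (q i)) := by
            exact Finset.prod_congr rfl fun i _ => key i
        _ ≤ φ := hq.2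
  calc volume A ≤ volume (⋃ s : Fin d → Bool, T s ⁻¹' B) := measure_mono hcov
    _ ≤ ∑ s : Fin d → Bool, volume (T s ⁻¹' B) := measure_iUnion_fintype_le _ _
    _ = ∑ _s : Fin d → Bool, volume B := by
        exact Finset.sum_congr rfl fun s _ =>
          (hMP s).measure_preimage MB.nullMeasurableSet
    _ = (Fintype.card (Fin d → Bool)) * volume B := by
        rw [Finset.sum_const, nsmul_eq_mul, Finset.card_univ]
    _ = 2 ^ d * volume B := by
        norm_num [Fintype.card_fun]
end

section
/- Let P be a set of n points chosen uniformly and independently at random from [0,1]^d, let δ = (c_d (ln n)/n)^{1/d} for a sufficiently large constant c_d, and let p be a point in the fortress [δ, 1−δ]^d. For any cone C with apex p and half-angle π/12, the probability that C contains no point of P other than p is at most n^{−Ω(1)}, where the exponent can be made arbitrarily large by increasing c_d. -/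
/-!
The ball of radius `δ / 200` centred at distance `δ / 2` from `p` along the axis of the cone lies
both in the cone (its points see the axis under an angle with cosine at least `99 / 101`) and, as
`p` is in the fortress, in the unit cube. Its volume is `α = ω_d (δ / 200)^d = ω_d c ln n / (200^d n)`,
so each sample point misses it with probability at most `1 - α ≤ e^{-α}`, and all `n` points miss
it with probability at most `e^{-nα} ≤ n^{-K}` as soon as `c ω_d ≥ 200^d K`.
-/

open MeasureTheory Metric Real InnerProductGeometry
open scoped RealInnerProductSpace

section Cone

variable {E : Type*} [NormedAddCommGroup E] [InnerProductSpace ℝ E]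

lemma cos_angle_ge_of_norm_sub_le {w v : E} {r : ℝ} (hwv : ‖w - v‖ ≤ r) (hr : r < ‖v‖) :
    (‖v‖ - r) / (‖v‖ + r) ≤ cos (angle w v) := by
  have hr0 : 0 ≤ r := (norm_nonneg _).trans hwv
  have hw_le : ‖w‖ ≤ ‖v‖ + r := by
    have := norm_sub_norm_le w v
    linarith
  have hv_pos : 0 < ‖v‖ := hr0.trans_lt hr
  have hw_pos : 0 < ‖w‖ := by
    have := norm_sub_norm_le v w
    rw [norm_sub_rev] at this
    linarith
  have hinner : (‖v‖ - r) * ‖v‖ ≤ ⟪w, v⟫ := by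
    have h := abs_real_inner_le_norm (w - v) v
    rw [inner_sub_left, real_inner_self_eq_norm_mul_norm] at h
    nlinarith [(abs_le.mp h).1, mul_le_mul_of_nonneg_right hwv (norm_nonneg v)]
  rw [cos_angle, div_le_div_iff₀ (by linarith) (by positivity)]
  nlinarith [mul_le_mul_of_nonneg_left hw_le (mul_nonneg (sub_nonneg.2 hr.le) (norm_nonneg v))]

lemma cos_pi_div_twelve_le : cos (π / 12) ≤ 99 / 101 := by
  have hπ := pi_gt_three
  refine (cos_le_one_div_sqrt_sq_add_one (by linarith) (by linarith)).trans ?_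
  have hsqrt : 101 / 99 ≤ √((π / 12) ^ 2 + 1) := Real.le_sqrt_of_sq_le (by nlinarith)
  rw [div_le_div_iff₀ (by positivity) (by norm_num)]
  linarith

lemma angle_sub_le_pi_div_twelve_of_mem_closedBall {p a x : E}
    (hx : x ∈ closedBall (p + a) (‖a‖ / 100)) (ha : a ≠ 0) :
    x ≠ p ∧ angle (x - p) a ≤ π / 12 := by
  have hwa : ‖(x - p) - a‖ ≤ ‖a‖ / 100 := by
    rwa [sub_sub, ← dist_eq_norm]
  have ha0 := norm_pos_iff.mpr ha
  refine ⟨?_, ?_⟩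
  · rintro rfl
    rw [sub_self, zero_sub, norm_neg] at hwa
    linarith
  · have hcos := cos_angle_ge_of_norm_sub_le hwa (by linarith)
    have h99 : (‖a‖ - ‖a‖ / 100) / (‖a‖ + ‖a‖ / 100) = 99 / 101 := by
      field_simp; ring
    rw [h99] at hcos
    have hπ := pi_gt_three
    exact (strictAntiOn_cos.le_iff_ge ⟨by positivity, by linarith⟩
      ⟨angle_nonneg _ _, angle_le_pi _ _⟩).1 (cos_pi_div_twelve_le.trans hcos)

end Cone

section UnitCube

variable {ι : Type*}

def unitCube (ι : Type*) : Set (EuclideanSpace ℝ ι) := {x | ∀ i, x i ∈ Set.Icc 0 1}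

lemma unitCube_eq_preimage_ofLp :
    unitCube ι = WithLp.ofLp ⁻¹' Set.univ.pi fun _ => Set.Icc (0 : ℝ) 1 := by
  ext x
  simp only [unitCube, Set.mem_ofPred_eq, Set.mem_preimage, Set.mem_pi, Set.mem_univ, true_imp_iff]

variable [Fintype ι]

lemma volume_unitCube : volume (unitCube ι) = 1 := by
  rw [unitCube_eq_preimage_ofLp, (PiLp.volume_preserving_ofLp ι).measure_preimage
    (MeasurableSet.univ_pi fun _ => measurableSet_Icc).nullMeasurableSet, volume_pi_pi]
  simp

instance : IsProbabilityMeasure (volume.restrict (unitCube ι)) :=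
  ⟨by rw [Measure.restrict_apply_univ, volume_unitCube]⟩

lemma closedBall_subset_unitCube {p : EuclideanSpace ℝ ι} {δ : ℝ}
    (hp : ∀ i, δ ≤ p i ∧ p i ≤ 1 - δ) : closedBall p δ ⊆ unitCube ι := by
  intro x hx i
  have hxi := abs_le.mp (Real.dist_eq _ _ ▸ (PiLp.dist_apply_le x p i).trans (mem_closedBall.mp hx))
  exact ⟨by linarith [(hp i).1], by linarith [(hp i).2]⟩

lemma exists_closedBall_subset_cone_inter_unitCube {p v : EuclideanSpace ℝ ι} {δ : ℝ}
    (hδ : 0 < δ) (hp : ∀ i, δ ≤ p i ∧ p i ≤ 1 - δ) (hv : v ≠ 0) :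
    ∃ q, closedBall q (δ / 200) ⊆ unitCube ι ∧
      ∀ x ∈ closedBall q (δ / 200), x ≠ p ∧ angle (x - p) v ≤ π / 12 := by
  have ht : 0 < δ / (2 * ‖v‖) := div_pos hδ (mul_pos two_pos (norm_pos_iff.mpr hv))
  set a := (δ / (2 * ‖v‖)) • v
  have ha : ‖a‖ = δ / 2 := by
    rw [norm_smul, norm_div, norm_mul, Real.norm_two, norm_norm, Real.norm_of_nonneg hδ.le]
    field_simp [norm_ne_zero_iff.mpr hv]
  refine ⟨p + a, ?_, fun x hx => ?_⟩
  · refine (closedBall_subset_closedBall' ?_).trans (closedBall_subset_unitCube hp)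
    rw [dist_self_add_left, ha]
    linarith
  · rw [show δ / 200 = ‖a‖ / 100 by rw [ha]; ring] at hx
    have haxis : angle (x - p) a = angle (x - p) v := angle_smul_right_of_pos _ _ ht
    exact haxis ▸ angle_sub_le_pi_div_twelve_of_mem_closedBall hx (smul_ne_zero ht.ne' hv)

end UnitCube

lemma measure_pi_forall_notMem_le {Ω ι : Type*} [MeasurableSpace Ω] [Fintype ι]
    (μ : Measure Ω) [IsProbabilityMeasure μ] {s : Set Ω} (hs : MeasurableSet s) {α : ℝ}
    (hα : 0 ≤ α) (hμs : ENNReal.ofReal α ≤ μ s) :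
    Measure.pi (fun _ : ι => μ) {ω | ∀ i, ω i ∉ s} ≤
      ENNReal.ofReal (exp (-(Fintype.card ι * α))) := by
  have hset : {ω : ι → Ω | ∀ i, ω i ∉ s} = Set.univ.pi fun _ => sᶜ := by
    ext
    simp
  have hcompl : μ sᶜ ≤ ENNReal.ofReal (exp (-α)) := calc
    μ sᶜ = 1 - μ s := prob_compl_eq_one_sub hs
    _ ≤ 1 - ENNReal.ofReal α := tsub_le_tsub_left hμs _
    _ = ENNReal.ofReal (1 - α) := by rw [ENNReal.ofReal_sub _ hα, ENNReal.ofReal_one]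
    _ ≤ ENNReal.ofReal (exp (-α)) := ENNReal.ofReal_le_ofReal (by linarith [add_one_le_exp (-α)])
  rw [hset, Measure.pi_pi, Finset.prod_const, Finset.card_univ, neg_mul_eq_mul_neg, exp_nat_mul,
    ENNReal.ofReal_pow (exp_pos _).le]
  exact pow_le_pow_left' hcompl _

lemma exp_neg_le_rpow_neg {x K y : ℝ} (hx : 0 < x) (h : K * log x ≤ y) :
    exp (-y) ≤ x ^ (-K) := by
  rw [rpow_def_of_pos hx]
  exact exp_le_exp.mpr (by linarith)

theorem stmt_9_general (d : ℕ) (K : ℝ) :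
    ∃ c : ℝ, 0 < c ∧ ∀ n : ℕ, 2 ≤ n →
      ∀ p : EuclideanSpace ℝ (Fin d),
        (∀ i, (c * Real.log n / n) ^ ((1 : ℝ) / d) ≤ p i ∧
              p i ≤ 1 - (c * Real.log n / n) ^ ((1 : ℝ) / d)) →
      ∀ v : EuclideanSpace ℝ (Fin d), v ≠ 0 →
        Measure.pi (fun _ : Fin n =>
            (volume : Measure (EuclideanSpace ℝ (Fin d))).restrict
              {x | ∀ i, x i ∈ Set.Icc (0 : ℝ) 1})
          {ω | ∀ i, ω i = p ∨
              ¬ InnerProductGeometry.angle (ω i - p) v ≤ Real.pi / 12}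
        ≤ ENNReal.ofReal ((n : ℝ) ^ (-K)) := by
  set B : ℝ := √π ^ d / Gamma (d / 2 + 1)
  have hB : 0 < B := div_pos (by positivity) (Gamma_pos_of_pos (by positivity))
  refine ⟨max 1 (K * 200 ^ d / B), by positivity, fun n hn p hp v hv => ?_⟩
  set c := max 1 (K * 200 ^ d / B)
  have hd : d ≠ 0 := by
    rintro rfl
    exact hv (Subsingleton.elim _ _)
  have : Nonempty (Fin d) := ⟨⟨0, Nat.pos_of_ne_zero hd⟩⟩
  have hlog : 0 < log n := log_pos (by exact_mod_cast hn)
  set δ := (c * log n / n) ^ ((1 : ℝ) / d)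
  have hδ_pow : δ ^ d = c * log n / n := by
    simp only [δ, one_div]
    exact rpow_inv_natCast_pow (by positivity) hd
  obtain ⟨q, hq_cube, hq_cone⟩ :=
    exists_closedBall_subset_cone_inter_unitCube (by positivity) hp hv
  set α := c * log n / n / 200 ^ d * B
  have hq_vol : ENNReal.ofReal α ≤ volume.restrict (unitCube (Fin d)) (closedBall q (δ / 200)) := by
    rw [Measure.restrict_eq_self _ hq_cube, EuclideanSpace.volume_closedBall, Fintype.card_fin,
      ← ENNReal.ofReal_pow (by positivity), ← ENNReal.ofReal_mul (by positivity)]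
    simp only [α, B, div_pow, hδ_pow, le_refl]
  have hα : K * log n ≤ n * α := by
    have hcB : K * 200 ^ d ≤ c * B := (div_le_iff₀ hB).mp (le_max_right _ _)
    calc K * log n = K * 200 ^ d * log n / 200 ^ d := by field_simp
      _ ≤ c * B * log n / 200 ^ d := by gcongr
      _ = n * α := by simp only [α]; field_simp
  change Measure.pi (fun _ : Fin n => volume.restrict (unitCube (Fin d))) _ ≤ _
  calc _ ≤ Measure.pi (fun _ : Fin n => volume.restrict (unitCube (Fin d)))
          {ω | ∀ i, ω i ∉ closedBall q (δ / 200)} :=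
        measure_mono fun ω hω i hi => (hω i).elim (hq_cone _ hi).1 (· (hq_cone _ hi).2)
    _ ≤ ENNReal.ofReal (exp (-(n * α))) := by
        have := measure_pi_forall_notMem_le (ι := Fin n) _ measurableSet_closedBall
          (by positivity) hq_vol
        rwa [Fintype.card_fin] at this
    _ ≤ _ := ENNReal.ofReal_le_ofReal (exp_neg_le_rpow_neg (by positivity) hα)

/-- For `n` uniform random points in `[0,1]^d`, a point `p` in the fortress
`[δ, 1−δ]^d` with `δ = (c·ln n / n)^{1/d}`, and any cone with apex `p` and half-angle
`π/12`, the probability that the cone contains no point of the sample other than `p`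
is at most `n^{-K}`, where `K` can be made arbitrarily large by increasing `c`. -/
theorem stmt_9 (d : ℕ) (hd : 1 ≤ d) (K : ℝ) (hK : 0 < K) :
    ∃ c : ℝ, 0 < c ∧ ∀ n : ℕ, 2 ≤ n →
      ∀ p : EuclideanSpace ℝ (Fin d),
        (∀ i, (c * Real.log n / n) ^ ((1 : ℝ) / d) ≤ p i ∧
              p i ≤ 1 - (c * Real.log n / n) ^ ((1 : ℝ) / d)) →
      ∀ v : EuclideanSpace ℝ (Fin d), v ≠ 0 →
        Measure.pi (fun _ : Fin n =>
            (volume : Measure (EuclideanSpace ℝ (Fin d))).restrict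
              {x | ∀ i, x i ∈ Set.Icc (0 : ℝ) 1})
          {ω | ∀ i, ω i = p ∨
              ¬ InnerProductGeometry.angle (ω i - p) v ≤ Real.pi / 12}
        ≤ ENNReal.ofReal ((n : ℝ) ^ (-K)) :=
  stmt_9_general d K
end

section
/- Let B be an axis-parallel box ∏_{i=1}^d [p_i, q_i] in ℝ^d with p = (p_1,…,p_d) and q = (q_1,…,q_d), and let D be a closed Euclidean ball containing both p and q. Then there exists a path from p to q along edges of B that is entirely contained in D; consequently D contains a d-dimensional simplex with vertices among the vertices of B whose volume is at least vol(B)/d!. -/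
/-!
Flip the coordinates from `p` to `q` one at a time, in increasing order of
`δ i = (q i - c i)² - (p i - c i)²`. After `j` flips the squared distance to the centre is
`‖p - c‖²` plus a prefix sum of the sorted `δ`s, and a prefix sum of a monotone sequence lies below
`max 0 (total) = max 0 (‖q - c‖² - ‖p - c‖²)`, so every vertex of this edge path stays in the ball,
hence so does its convex hull. That hull contains the affine image, under
`t ↦ p + (q - p) * t`, of an order simplex `{1 ≥ t (σ 0) ≥ ⋯ ≥ t (σ (d-1)) ≥ 0}`; the `d!` order
simplices have equal volume and cover the unit cube, so each has volume at least `1 / d!`.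
-/

open MeasureTheory Set
open scoped Nat

theorem Monotone.sum_le_max_zero_sum {ι M : Type*} [LinearOrder ι] [Fintype ι]
    [AddCommMonoid M] [LinearOrder M] [IsOrderedAddMonoid M] {g : ι → M} (hg : Monotone g)
    {s : Finset ι} (hs : IsLowerSet (s : Set ι)) :
    ∑ i ∈ s, g i ≤ max 0 (∑ i, g i) := by
  by_cases hnonpos : ∀ i ∈ s, g i ≤ 0
  · exact le_max_of_le_left (Finset.sum_nonpos hnonpos)
  push Not at hnonpos
  obtain ⟨i₀, hi₀s, hi₀⟩ := hnonpos
  have hcompl : 0 ≤ ∑ i ∈ sᶜ, g i := Finset.sum_nonneg fun i hi =>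
    have hlt : i₀ < i := lt_of_not_ge fun hle => Finset.mem_compl.1 hi (hs hle hi₀s)
    hi₀.le.trans (hg hlt.le)
  rw [← Finset.sum_add_sum_compl s g]
  exact le_max_of_le_right (le_add_of_nonneg_right hcompl)

theorem Finset.sum_range_ite_lt_sub {M : Type*} [AddCommGroup M] (f : ℕ → M) {m n : ℕ}
    (h : m < n) :
    ∑ j ∈ Finset.range n, (if m < j then f j - f (j + 1) else 0) = f (m + 1) - f n := by
  induction n, h using Nat.le_induction with
  | base => simpa using Finset.sum_eq_zero fun j hj => if_neg (by simp at hj; omega)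
  | succ n hmn ih => rw [Finset.sum_range_succ, ih, if_pos (Nat.lt_of_succ_le hmn)]; abel

def boxMap {ι : Type*} [Fintype ι] [DecidableEq ι] (p q : ι → ℝ) : (ι → ℝ) →ᵃ[ℝ] ι → ℝ :=
  (Matrix.toLin' (Matrix.diagonal (q - p))).toAffineMap + AffineMap.const ℝ _ p

section boxMap

variable {ι : Type*} [Fintype ι] [DecidableEq ι]

theorem boxMap_apply (p q t : ι → ℝ) (i : ι) : boxMap p q t i = p i + (q i - p i) * t i := by
  simp [boxMap, Matrix.mulVec_diagonal, add_comm]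

theorem volume_image_boxMap (p q : ι → ℝ) (s : Set (ι → ℝ)) :
    volume (boxMap p q '' s) = ENNReal.ofReal |∏ i, (q i - p i)| * volume s := by
  have : ⇑(boxMap p q) = (· + p) ∘ Matrix.toLin' (Matrix.diagonal (q - p)) := rfl
  rw [this, image_comp, image_add_right, measure_preimage_add_right,
    Measure.addHaar_image_linearMap, LinearMap.det_toLin', Matrix.det_diagonal]
  rfl

end boxMap

variable {d : ℕ}

def staircase (σ : Equiv.Perm (Fin d)) (p q : Fin d → ℝ) (j : ℕ) : Fin d → ℝ :=
  fun i => if (σ.symm i : ℕ) < j then q i else p i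

def orderSimplex (σ : Equiv.Perm (Fin d)) : Set (Fin d → ℝ) :=
  univ.pi (fun _ => Icc 0 1) ∩ {t | Antitone (t ∘ σ)}

section staircase

variable (σ : Equiv.Perm (Fin d)) (p q : Fin d → ℝ)

theorem staircase_zero : staircase σ p q 0 = p := by
  ext i; simp [staircase]

theorem staircase_of_le {j : ℕ} (hj : d ≤ j) : staircase σ p q j = q := by
  ext i; simp [staircase, (σ.symm i).isLt.trans_le hj]

theorem staircase_apply_eq_or_eq (j : ℕ) (i : Fin d) :
    staircase σ p q j i = p i ∨ staircase σ p q j i = q i := by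
  unfold staircase; split_ifs <;> simp

theorem staircase_apply_perm (j : ℕ) (k : Fin d) :
    staircase σ p q j (σ k) = if (k : ℕ) < j then q (σ k) else p (σ k) := by
  simp [staircase]

theorem staircase_apply_eq_succ_of_ne {j : ℕ} (hj : j < d) {i : Fin d} (hi : i ≠ σ ⟨j, hj⟩) :
    staircase σ p q j i = staircase σ p q (j + 1) i := by
  have : (σ.symm i : ℕ) ≠ j := fun h => hi (by rw [← Fin.ext (b := ⟨j, hj⟩) h]; simp)
  unfold staircase
  by_cases h : (σ.symm i : ℕ) < j
  · rw [if_pos h, if_pos (by omega)]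
  · rw [if_neg h, if_neg (by omega)]

theorem staircase_eq_boxMap (j : ℕ) : staircase σ p q j = boxMap p q (staircase σ 0 1 j) := by
  ext i
  rw [boxMap_apply]
  unfold staircase
  split_ifs <;> simp

end staircase

theorem dist_sq_toLp_staircase (σ : Equiv.Perm (Fin d)) (p q c : EuclideanSpace ℝ (Fin d))
    (j : ℕ) :
    dist (WithLp.toLp 2 (staircase σ p q j)) c ^ 2 = dist p c ^ 2 +
      ∑ k ∈ Finset.univ.filter (fun k : Fin d => (k : ℕ) < j),
        (dist (q (σ k)) (c (σ k)) ^ 2 - dist (p (σ k)) (c (σ k)) ^ 2) := by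
  rw [EuclideanSpace.dist_sq_eq, EuclideanSpace.dist_sq_eq,
    ← Equiv.sum_comp σ fun i => dist (p i) (c i) ^ 2, ← Equiv.sum_comp σ, Finset.sum_filter,
    ← Finset.sum_add_distrib]
  refine Finset.sum_congr rfl fun k _ => ?_
  rw [PiLp.toLp_apply, staircase_apply_perm]
  split_ifs <;> ring

theorem exists_perm_staircase_mem_closedBall {p q c : EuclideanSpace ℝ (Fin d)} {r : ℝ}
    (hp : p ∈ Metric.closedBall c r) (hq : q ∈ Metric.closedBall c r) :
    ∃ σ : Equiv.Perm (Fin d), ∀ j, WithLp.toLp 2 (staircase σ p q j) ∈ Metric.closedBall c r := by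
  set δ : Fin d → ℝ := fun i => dist (q i) (c i) ^ 2 - dist (p i) (c i) ^ 2
  refine ⟨Tuple.sort δ, fun j => ?_⟩
  have hprefix := (Tuple.monotone_sort δ).sum_le_max_zero_sum
    (s := Finset.univ.filter fun k : Fin d => (k : ℕ) < j) fun a b hba hb => by
      simp only [Finset.coe_filter, Finset.mem_univ, true_and, Set.mem_ofPred_eq] at hb ⊢
      exact lt_of_le_of_lt hba hb
  have htotal : ∑ k, δ (Tuple.sort δ k) = dist q c ^ 2 - dist p c ^ 2 := by
    rw [Equiv.sum_comp, Finset.sum_sub_distrib, EuclideanSpace.dist_sq_eq,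
      EuclideanSpace.dist_sq_eq]
  simp only [Function.comp_apply, htotal] at hprefix
  have hr : 0 ≤ r := dist_nonneg.trans hp
  rw [Metric.mem_closedBall] at *
  rw [← pow_le_pow_iff_left₀ dist_nonneg hr two_ne_zero, dist_sq_toLp_staircase]
  have hp₂ := pow_le_pow_left₀ dist_nonneg hp 2
  have hq₂ := pow_le_pow_left₀ dist_nonneg hq 2
  have hmax : max 0 (dist q c ^ 2 - dist p c ^ 2) ≤ r ^ 2 - dist p c ^ 2 :=
    max_le (by linarith) (by linarith)
  linarith

theorem volume_orderSimplex_eq (σ τ : Equiv.Perm (Fin d)) :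
    volume (orderSimplex σ) = volume (orderSimplex τ) := by
  set e : Fin d ≃ Fin d := τ.symm.trans σ
  set F := MeasurableEquiv.piCongrLeft (fun _ : Fin d => ℝ) e
  have hF : ∀ t k, F t (e k) = t k := fun t k =>
    MeasurableEquiv.piCongrLeft_apply_apply (β := fun _ => ℝ) e t k
  have hcomp : ∀ t : Fin d → ℝ, F t ∘ σ = t ∘ τ := fun t => funext fun k => by
    simpa [e] using hF t (τ k)
  rw [← (volume_measurePreserving_piCongrLeft (fun _ : Fin d => ℝ) e).measure_preimage_equiv]
  congr 1
  ext t
  change F t ∈ orderSimplex σ ↔ t ∈ orderSimplex τ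
  simp only [orderSimplex, mem_inter_iff, mem_pi, mem_univ, forall_const, mem_ofPred_eq, hcomp,
    ← e.forall_congr_right (q := fun i => F t i ∈ Icc 0 1), hF]

theorem inv_factorial_le_volume_orderSimplex (σ : Equiv.Perm (Fin d)) :
    (d ! : ENNReal)⁻¹ ≤ volume (orderSimplex σ) := by
  have hcover : univ.pi (fun _ : Fin d => Icc (0 : ℝ) 1) ⊆ ⋃ τ, orderSimplex τ := fun t ht =>
    mem_iUnion.2 ⟨Tuple.sort t * Fin.revPerm, ht,
      fun _ _ hkl => Tuple.monotone_sort t (Fin.rev_le_rev.2 hkl)⟩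
  rw [ENNReal.inv_le_iff_le_mul (fun _ => by positivity)
    (fun h => absurd h (ENNReal.natCast_ne_top _))]
  calc 1 = volume (univ.pi fun _ : Fin d => Icc (0 : ℝ) 1) := by simp [Real.volume_Icc_pi]
    _ ≤ ∑ τ, volume (orderSimplex τ) :=
      (measure_mono hcover).trans (measure_iUnion_fintype_le _ _)
    _ = d ! * volume (orderSimplex σ) := by
      simp [volume_orderSimplex_eq _ σ, Fintype.card_perm]

theorem orderSimplex_subset_convexHull (σ : Equiv.Perm (Fin d)) :
    orderSimplex σ ⊆ convexHull ℝ (range fun j : Fin (d + 1) => staircase σ 0 1 j) := by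
  rintro t ⟨ht01, hanti⟩
  simp only [mem_pi, mem_univ, forall_const, mem_Icc] at ht01
  -- `f j - f (j + 1)` is the barycentric weight of the `j`-th vertex, where `f` lists
  -- `1, t (σ 0), …, t (σ (d - 1)), 0, 0, …`
  let g : ℕ → ℝ := fun k => if h : k < d then t (σ ⟨k, h⟩) else 0
  let f : ℕ → ℝ := fun j => if j = 0 then 1 else g (j - 1)
  have hf_succ (k : ℕ) : f (k + 1) = g k := by simp [f]
  have hf_anti : Antitone f := antitone_nat_of_succ_le fun n => by
    rw [hf_succ]
    rcases n with _ | n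
    · simp only [g, f]; split_ifs <;> simp [ht01]
    · rw [hf_succ]; simp only [g]
      split_ifs with h₁ h₂
      · exact hanti (Fin.mk_le_mk.2 n.le_succ)
      · omega
      · exact (ht01 _).1
      · rfl
  have hsum : ∑ j : Fin (d + 1), (f j - f (j + 1)) = 1 := by
    rw [Fin.sum_univ_eq_sum_range (fun j => f j - f (j + 1)), Finset.sum_range_sub', hf_succ]
    simp [f, g]
  have ht : t = ∑ j : Fin (d + 1), (f j - f (j + 1)) • staircase σ 0 1 j := by
    ext i
    simp only [Finset.sum_apply, Pi.smul_apply, smul_eq_mul, staircase, mul_ite, mul_one,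
      mul_zero, Pi.zero_apply, Pi.one_apply]
    rw [Fin.sum_univ_eq_sum_range (fun j => if (σ.symm i : ℕ) < j then f j - f (j + 1) else 0),
      Finset.sum_range_ite_lt_sub f (by omega), hf_succ, hf_succ]
    simp [g]
  rw [ht]
  exact (convex_convexHull ℝ _).sum_mem (fun j _ => sub_nonneg.2 (hf_anti (Nat.le_succ _))) hsum
    fun j _ => subset_convexHull ℝ _ (mem_range_self j)

theorem ofReal_div_factorial_le_volume_convexHull_staircase (σ : Equiv.Perm (Fin d))
    (p q : Fin d → ℝ) :
    ENNReal.ofReal ((∏ i, (q i - p i)) / d !) ≤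
      volume (convexHull ℝ (range fun j : Fin (d + 1) => WithLp.toLp 2 (staircase σ p q j))) := by
  set K := convexHull ℝ (range fun j : Fin (d + 1) => WithLp.toLp 2 (staircase σ p q j))
  let A : (Fin d → ℝ) →ᵃ[ℝ] EuclideanSpace ℝ (Fin d) :=
    (WithLp.linearEquiv 2 ℝ (Fin d → ℝ)).symm.toLinearMap.toAffineMap.comp (boxMap p q)
  have hK : K = A '' convexHull ℝ (range fun j : Fin (d + 1) => staircase σ 0 1 j) := by
    rw [A.image_convexHull, ← range_comp]
    refine congrArg (convexHull ℝ) (congrArg range (funext fun j => ?_))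
    simp [A, staircase_eq_boxMap σ p q j]
  have hsub : boxMap p q '' orderSimplex σ ⊆ MeasurableEquiv.toLp 2 (Fin d → ℝ) ⁻¹' K := by
    rintro _ ⟨t, ht, rfl⟩
    rw [hK]
    exact ⟨t, orderSimplex_subset_convexHull σ ht, rfl⟩
  calc ENNReal.ofReal ((∏ i, (q i - p i)) / d !)
      ≤ ENNReal.ofReal |∏ i, (q i - p i)| * (d ! : ENNReal)⁻¹ := by
        rw [ENNReal.ofReal_div_of_pos (by positivity), ENNReal.ofReal_natCast, div_eq_mul_inv]
        gcongr
        exact le_abs_self _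
    _ ≤ ENNReal.ofReal |∏ i, (q i - p i)| * volume (orderSimplex σ) := by
        gcongr
        exact inv_factorial_le_volume_orderSimplex σ
    _ = volume (boxMap p q '' orderSimplex σ) := (volume_image_boxMap p q _).symm
    _ ≤ volume (MeasurableEquiv.toLp 2 (Fin d → ℝ) ⁻¹' K) := measure_mono hsub
    _ = volume K :=
        (EuclideanSpace.volume_preserving_symm_measurableEquiv_toLp (Fin d)).symm
          |>.measure_preimage_equiv K

theorem stmt_11_general (d : ℕ) (p q c : EuclideanSpace ℝ (Fin d)) (r : ℝ)
    (hp : p ∈ Metric.closedBall c r) (hq : q ∈ Metric.closedBall c r) :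
    (∃ (k : ℕ) (w : ℕ → EuclideanSpace ℝ (Fin d)),
      w 0 = p ∧ w k = q ∧
      (∀ j ≤ k, ∀ i, w j i = p i ∨ w j i = q i) ∧
      (∀ j < k, (∃ i₀, ∀ i, i ≠ i₀ → w j i = w (j + 1) i) ∧
        segment ℝ (w j) (w (j + 1)) ⊆ Metric.closedBall c r)) ∧
    ∃ s : Fin (d + 1) → EuclideanSpace ℝ (Fin d),
      (∀ m i, s m i = p i ∨ s m i = q i) ∧
      convexHull ℝ (Set.range s) ⊆ Metric.closedBall c r ∧
      ENNReal.ofReal ((∏ i, (q i - p i)) / (Nat.factorial d)) ≤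
        volume (convexHull ℝ (Set.range s)) := by
  obtain ⟨σ, hσ⟩ := exists_perm_staircase_mem_closedBall hp hq
  let w : ℕ → EuclideanSpace ℝ (Fin d) := fun j => WithLp.toLp 2 (staircase σ p q j)
  refine ⟨⟨d, w, by simp [w, staircase_zero], by simp [w, staircase_of_le σ p q le_rfl],
      fun j _ i => staircase_apply_eq_or_eq σ p q j i,
      fun j hj => ⟨⟨σ ⟨j, hj⟩, fun i hi => staircase_apply_eq_succ_of_ne σ p q hj hi⟩,
        (convex_closedBall c r).segment_subset (hσ j) (hσ (j + 1))⟩⟩,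
    fun j => w j, fun j i => staircase_apply_eq_or_eq σ p q j i,
    convexHull_min (range_subset_iff.2 fun j => hσ j) (convex_closedBall c r),
    ofReal_div_factorial_le_volume_convexHull_staircase σ p q⟩

/-- Box-path-in-ball lemma: if a closed Euclidean ball `D` contains the two diametrical
corners `p` and `q` of the axis-parallel box `B = ∏ [p_i, q_i]`, then there is a path
from `p` to `q` along edges of `B` contained in `D`; consequently `D` contains a
`d`-simplex with vertices among the vertices of `B` of volume at least `vol(B)/d!`. -/
theorem stmt_11 (d : ℕ) (hd : 1 ≤ d) (p q c : EuclideanSpace ℝ (Fin d)) (r : ℝ)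
    (hpq : ∀ i, p i ≤ q i)
    (hp : p ∈ Metric.closedBall c r) (hq : q ∈ Metric.closedBall c r) :
    (∃ (k : ℕ) (w : ℕ → EuclideanSpace ℝ (Fin d)),
      w 0 = p ∧ w k = q ∧
      (∀ j ≤ k, ∀ i, w j i = p i ∨ w j i = q i) ∧
      (∀ j < k, (∃ i₀, ∀ i, i ≠ i₀ → w j i = w (j + 1) i) ∧
        segment ℝ (w j) (w (j + 1)) ⊆ Metric.closedBall c r)) ∧
    ∃ s : Fin (d + 1) → EuclideanSpace ℝ (Fin d),
      (∀ m i, s m i = p i ∨ s m i = q i) ∧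
      convexHull ℝ (Set.range s) ⊆ Metric.closedBall c r ∧
      ENNReal.ofReal ((∏ i, (q i - p i)) / (Nat.factorial d)) ≤
        volume (convexHull ℝ (Set.range s)) :=
  stmt_11_general d p q c r hp hq
end

section
/- Let P be a finite point set in ℝ^d and for each p ∈ P fix a finite cone cover 𝒞(p) of ℝ^d by cones with apex p and half-angle at most π/12, each cone containing at least one point of P∖{p}. Define reach(p) = max over C ∈ 𝒞(p) of the distance from p to the nearest point of P∖{p} in C. If pq is a Delaunay edge of P (i.e., some open ball with p and q on its boundary contains no point of P), then |pq| ≤ 2·reach(p). -/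
/-!
Let `x` be the centre and `ρ = |px| = |qx|` the radius of the empty ball. The direction of
`x` from `p` lies in some cone, which contains a point `r ≠ p` of `P` with `|pr| ≤ ℓ`. The
angle `∠rpx` is at most `π/6 ≤ π/3`, so `2⟪r - p, x - p⟫ ≥ |pr| ρ`, while `r` lying outside
the open ball means `2⟪r - p, x - p⟫ ≤ |pr|²`. Hence `ρ ≤ |pr| ≤ ℓ` and `|pq| ≤ 2ρ ≤ 2ℓ`.
-/

open InnerProductGeometry Real

section

variable {V : Type*} [NormedAddCommGroup V] [InnerProductSpace ℝ V]

lemma norm_mul_norm_le_two_mul_inner_of_angle_le_pi_div_three {a b : V}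
    (h : angle a b ≤ π / 3) : ‖a‖ * ‖b‖ ≤ 2 * inner ℝ a b := by
  have hcos : 1 / 2 ≤ cos (angle a b) := by
    rw [← cos_pi_div_three]
    exact cos_le_cos_of_nonneg_of_le_pi (angle_nonneg a b) (by linarith [pi_pos]) h
  rw [← cos_angle_mul_norm_mul_norm]
  nlinarith [mul_nonneg (norm_nonneg a) (norm_nonneg b)]

lemma norm_le_norm_of_angle_le_pi_div_three {a b : V} (ha : a ≠ 0)
    (hab : angle a b ≤ π / 3) (h : ‖b‖ ≤ ‖a - b‖) : ‖b‖ ≤ ‖a‖ := by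
  have hinner : 2 * inner ℝ a b ≤ ‖a‖ ^ 2 := by
    have := pow_le_pow_left₀ (norm_nonneg b) h 2
    rw [norm_sub_sq_real] at this
    linarith
  have hpos : 0 < ‖a‖ := norm_pos_iff.mpr ha
  nlinarith [norm_mul_norm_le_two_mul_inner_of_angle_le_pi_div_three hab]

end

theorem stmt_18_general (d : ℕ) (P : Finset (EuclideanSpace ℝ (Fin d)))
    (p : EuclideanSpace ℝ (Fin d))
    (𝒞 : Finset (EuclideanSpace ℝ (Fin d)))
    (hcover : ∀ u : EuclideanSpace ℝ (Fin d), u ≠ p →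
      ∃ v ∈ 𝒞, InnerProductGeometry.angle (u - p) v ≤ Real.pi / 12)
    (ℓ : ℝ)
    (hreach : ∀ v ∈ 𝒞, ∃ q ∈ P, q ≠ p ∧
      InnerProductGeometry.angle (q - p) v ≤ Real.pi / 12 ∧ dist p q ≤ ℓ)
    (q : EuclideanSpace ℝ (Fin d)) (hqp : q ≠ p)
    (hDel : ∃ (x : EuclideanSpace ℝ (Fin d)) (ρ : ℝ),
      dist p x = ρ ∧ dist q x = ρ ∧ ∀ z ∈ P, ρ ≤ dist z x) :
    dist p q ≤ 2 * ℓ := by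
  obtain ⟨x, ρ, hpx, hqx, hempty⟩ := hDel
  have hxp : x ≠ p := by
    rintro rfl
    exact hqp (dist_eq_zero.mp (hqx.trans (hpx.symm.trans (dist_self x))))
  obtain ⟨v, hv, hxv⟩ := hcover x hxp
  obtain ⟨r, hrP, hrp, hrv, hrℓ⟩ := hreach v hv
  have hangle : angle (r - p) (x - p) ≤ π / 3 :=
    calc angle (r - p) (x - p) ≤ angle (r - p) v + angle v (x - p) :=
          angle_le_angle_add_angle _ _ _
      _ ≤ π / 3 := by rw [angle_comm v]; linarith [pi_pos]
  have hρr : ρ ≤ dist p r := by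
    have hout : ‖x - p‖ ≤ ‖(r - p) - (x - p)‖ := by
      rw [sub_sub_sub_cancel_right, ← dist_eq_norm, ← dist_eq_norm, dist_comm, hpx]
      exact hempty r hrP
    have := norm_le_norm_of_angle_le_pi_div_three (sub_ne_zero.mpr hrp) hangle hout
    rwa [← dist_eq_norm, ← dist_eq_norm, dist_comm, hpx, dist_comm] at this
  calc dist p q ≤ dist p x + dist x q := dist_triangle p x q
    _ = 2 * ρ := by rw [hpx, dist_comm, hqx]; ring
    _ ≤ 2 * ℓ := by linarith

/-- If every cone of a cover of `ℝ^d` by cones with apex `p` and half-angle `π/12`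
contains a point of `P ∖ {p}` within distance `ℓ = reach(p)`, then every Delaunay edge
`pq` of `P` satisfies `|pq| ≤ 2·reach(p)`. A cone is given by a nonzero direction `v`,
and a Delaunay edge is witnessed by a ball with `p` and `q` on its boundary and no
point of `P` in its interior. -/
theorem stmt_18 (d : ℕ) (P : Finset (EuclideanSpace ℝ (Fin d)))
    (p : EuclideanSpace ℝ (Fin d)) (hp : p ∈ P)
    (𝒞 : Finset (EuclideanSpace ℝ (Fin d))) (h𝒞 : ∀ v ∈ 𝒞, v ≠ 0)
    (hcover : ∀ u : EuclideanSpace ℝ (Fin d), u ≠ p →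
      ∃ v ∈ 𝒞, InnerProductGeometry.angle (u - p) v ≤ Real.pi / 12)
    (ℓ : ℝ)
    (hreach : ∀ v ∈ 𝒞, ∃ q ∈ P, q ≠ p ∧
      InnerProductGeometry.angle (q - p) v ≤ Real.pi / 12 ∧ dist p q ≤ ℓ)
    (q : EuclideanSpace ℝ (Fin d)) (hq : q ∈ P) (hqp : q ≠ p)
    (hDel : ∃ (x : EuclideanSpace ℝ (Fin d)) (ρ : ℝ),
      dist p x = ρ ∧ dist q x = ρ ∧ ∀ z ∈ P, ρ ≤ dist z x) :
    dist p q ≤ 2 * ℓ :=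
  stmt_18_general d P p 𝒞 hcover ℓ hreach q hqp hDel
end
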